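/- arXiv:2007.06248 — 3 statements merged into one kernel-verified Lean document; each statement's English description precedes it below -/
import Mathlib

section
/- Let φ be a 3-CNF formula over variables x₁, …, x_n, let TA'_φ be its associated threshold automaton with trivial initial rules, and let σ₀ be the initial configuration of TA'_φ with exactly one process in each initial location ℓ₁, …, ℓ_n (parameter value n) and all shared variables equal to 0. Then φ is satisfiable if and only if there is a schedule τ applicable to σ₀ such that τ(σ₀).κ(ℓ_F) > 0. In particular, all guards of TA'_φ are constant rise guards (of the form x ≥ a₀ with a₀ ∈ ℕ) and TA'_φ is acyclic. -/
/-!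
Threshold automata (Konnov, Veith, Widder), following
"Complexity of Verification and Synthesis of Threshold Automata".
-/

/-- A threshold guard `x ⋈ a₀ + a₁·p₁ + … + a_{|Π|}·p_{|Π|}` over shared variables `V` and
parameters `P`.  `isRise = true` means a *rise* guard `x ≥ …`, and `isRise = false` means a
*fall* guard `x < …`. -/
structure TGuard (V P : Type) where
  var : V
  isRise : Bool
  a0 : ℚ
  coef : P → ℚ

/-- A configuration `σ = (κ, g, p)`: numbers of processes in each location, values of the
shared variables, and values of the parameters. -/
structure Config (L V P : Type) where
  κ : L → ℕ
  g : V → ℕ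
  p : P → ℕ

/-- A rule of a threshold automaton: source and target locations, a guard that is a
(finite) conjunction of threshold guards, and an update `V → {0,1}`. -/
structure TRule (L V P : Type) where
  src : L
  dst : L
  guard : List (TGuard V P)
  upd : V → ℕ
  upd_le_one : ∀ v, upd v ≤ 1

/-- A threshold automaton `(L, I, Γ, R)` together with its environment `(Π, RC, N)`.
`L`, `V`, `P` are the types of locations, shared variables and parameters, and `R` is the
index type of rules. -/
structure TA (L V P R : Type) where
  initial : Set L
  initial_nonempty : initial.Nonempty
  rc : Set (P → ℕ)
  N : (P → ℕ) → ℕ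
  rule : R → TRule L V P

variable {L V P R : Type}

/-- Satisfaction of a threshold guard by values `g` of the shared variables and `p` of the
parameters. -/
def TGuard.holds [Fintype P] (φ : TGuard V P) (g : V → ℕ) (p : P → ℕ) : Prop :=
  if φ.isRise then φ.a0 + ∑ i : P, φ.coef i * (p i : ℚ) ≤ (g φ.var : ℚ)
  else (g φ.var : ℚ) < φ.a0 + ∑ i : P, φ.coef i * (p i : ℚ)

/-- A configuration enables a rule. -/
def TRule.enabledAt [Fintype P] (r : TRule L V P) (σ : Config L V P) : Prop :=
  0 < σ.κ r.src ∧ ∀ φ ∈ r.guard, φ.holds σ.g σ.p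

/-- The result of firing a rule at a configuration. -/
def TRule.fire [DecidableEq L] (r : TRule L V P) (σ : Config L V P) : Config L V P where
  κ := fun ℓ => σ.κ ℓ + (if ℓ = r.dst then 1 else 0) - (if ℓ = r.src then 1 else 0)
  g := fun v => σ.g v + r.upd v
  p := σ.p

namespace TA

variable [Fintype P] [DecidableEq L]

/-- `σ` is a configuration of `ta`: the parameters satisfy the resilience condition and the
total number of processes is `N(p)`. -/
def validConfig [Fintype L] (ta : TA L V P R) (σ : Config L V P) : Prop :=
  σ.p ∈ ta.rc ∧ ∑ ℓ : L, σ.κ ℓ = ta.N σ.p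

/-- Initial configurations. -/
def isInitial [Fintype L] (ta : TA L V P R) (σ : Config L V P) : Prop :=
  ta.validConfig σ ∧ (∀ ℓ, ℓ ∉ ta.initial → σ.κ ℓ = 0) ∧ ∀ v, σ.g v = 0

/-- A schedule (finite sequence of rules) is applicable to a configuration. -/
def applicable (ta : TA L V P R) : Config L V P → List R → Prop
  | _, [] => True
  | σ, r :: τ => (ta.rule r).enabledAt σ ∧ ta.applicable ((ta.rule r).fire σ) τ

/-- The configuration `τ(σ)` resulting from applying a schedule. -/
def apply (ta : TA L V P R) : Config L V P → List R → Config L V P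
  | σ, [] => σ
  | σ, r :: τ => ta.apply ((ta.rule r).fire σ) τ

/-- The configurations visited by the path from `σ` along `τ` (including both endpoints). -/
def visited (ta : TA L V P R) : Config L V P → List R → List (Config L V P)
  | σ, [] => [σ]
  | σ, r :: τ => σ :: ta.visited ((ta.rule r).fire σ) τ

/-- Reachability `σ →* σ'`. -/
def reaches (ta : TA L V P R) (σ σ' : Config L V P) : Prop :=
  ∃ τ : List R, ta.applicable σ τ ∧ ta.apply σ τ = σ'

/-- The set of all threshold guards occurring in rules of the automaton. -/
def guards (ta : TA L V P R) : Set (TGuard V P) :=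
  {φ | ∃ r : R, φ ∈ (ta.rule r).guard}

/-- The context `ω(σ)`: rise guards of `ta` that are true in `σ` together with fall guards
of `ta` that are false in `σ`. -/
def context (ta : TA L V P R) (σ : Config L V P) : Set (TGuard V P) :=
  {φ | φ ∈ ta.guards ∧ if φ.isRise then φ.holds σ.g σ.p else ¬ φ.holds σ.g σ.p}

/-- A schedule applicable at `σ` is steady if all configurations visited by the
corresponding path have the same context. -/
def steady (ta : TA L V P R) (σ : Config L V P) (τ : List R) : Prop :=
  ∀ σ' ∈ ta.visited σ τ, ta.context σ' = ta.context σ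

end TA

/-! ### The threshold automaton `TA_φ` associated with a 3-CNF formula `φ`

A 3-CNF formula over variables `x₁, …, x_n` with clauses `C₁, …, C_m` is given by a
function `C : Fin m → Fin 3 → Fin n × Bool`, where `C j t = (i, b)` means that the `t`-th
literal of clause `j` is `x_i` (if `b = true`) or `¬x_i` (if `b = false`). -/

/-- Locations: `ℓ_i`, `⊤_i`, `⊥_i` (for `1 ≤ i ≤ n`), `ℓ_mid` and `ℓ_F`. -/
abbrev SatLoc (n : ℕ) := Fin n ⊕ Fin n ⊕ Fin n ⊕ Fin 2

def satStart {n : ℕ} (i : Fin n) : SatLoc n := Sum.inl i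
def satTop {n : ℕ} (i : Fin n) : SatLoc n := Sum.inr (Sum.inl i)
def satBot {n : ℕ} (i : Fin n) : SatLoc n := Sum.inr (Sum.inr (Sum.inl i))
def satMid {n : ℕ} : SatLoc n := Sum.inr (Sum.inr (Sum.inr 0))
def satFin {n : ℕ} : SatLoc n := Sum.inr (Sum.inr (Sum.inr 1))

/-- Rules: `(ℓ_i → ⊤_i)`, `(ℓ_i → ⊥_i)`, `(⊤_i → ℓ_mid)`, `(⊥_i → ℓ_mid)` and the final
rule `(ℓ_mid → ℓ_F)`. -/
abbrev SatRule (n : ℕ) := Fin n ⊕ Fin n ⊕ Fin n ⊕ Fin n ⊕ Unit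

/-- A guard with constant threshold `x ⋈ a` (all parameter coefficients are `0`). -/
def constGuard {V P : Type} (isRise : Bool) (x : V) (a : ℚ) : TGuard V P :=
  ⟨x, isRise, a, fun _ => 0⟩

/-- The update incrementing exactly the shared variable `x`. -/
def unitUpd {V : Type} [DecidableEq V] (x : V) : V → ℕ := fun v => if v = x then 1 else 0

theorem unitUpd_le_one {V : Type} [DecidableEq V] (x v : V) : unitUpd x v ≤ 1 := by
  unfold unitUpd; split <;> omega

/-- Satisfiability of the 3-CNF formula given by `C`. -/
def cnfSatisfiable {n m : ℕ} (C : Fin m → Fin 3 → Fin n × Bool) : Prop :=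
  ∃ v : Fin n → Bool, ∀ j : Fin m, ∃ t : Fin 3, v (C j t).1 = (C j t).2

/-- Update (over shared variables `c₁, …, c_m`) incrementing `c_j` for every clause `C_j`
containing the literal `(i, b)`. -/
def litUpd' {n m : ℕ} (C : Fin m → Fin 3 → Fin n × Bool) (i : Fin n) (b : Bool) :
    Fin m → ℕ := fun j => if ∃ t : Fin 3, C j t = (i, b) then 1 else 0

theorem litUpd'_le_one {n m : ℕ} (C : Fin m → Fin 3 → Fin n × Bool) (i : Fin n) (b : Bool)
    (j : Fin m) : litUpd' C i b j ≤ 1 := by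
  unfold litUpd'; split <;> omega

/-- The rules of `TA'_φ`: the rules leaving the initial locations have trivial guards and
no updates. -/
def satRule' {n m : ℕ} (C : Fin m → Fin 3 → Fin n × Bool) :
    SatRule n → TRule (SatLoc n) (Fin m) Unit
  | Sum.inl i => ⟨satStart i, satTop i, [], fun _ => 0, fun _ => Nat.zero_le 1⟩
  | Sum.inr (Sum.inl i) => ⟨satStart i, satBot i, [], fun _ => 0, fun _ => Nat.zero_le 1⟩
  | Sum.inr (Sum.inr (Sum.inl i)) =>
      ⟨satTop i, satMid, [], litUpd' C i true, fun j => litUpd'_le_one C i true j⟩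
  | Sum.inr (Sum.inr (Sum.inr (Sum.inl i))) =>
      ⟨satBot i, satMid, [], litUpd' C i false, fun j => litUpd'_le_one C i false j⟩
  | Sum.inr (Sum.inr (Sum.inr (Sum.inr _))) =>
      ⟨satMid, satFin, (List.finRange m).map fun j => constGuard true j 1,
        fun _ => 0, fun _ => Nat.zero_le 1⟩

/-- The threshold automaton `TA'_φ` with trivial initial rules. -/
def satTA' {n m : ℕ} (hn : 0 < n) (C : Fin m → Fin 3 → Fin n × Bool) :
    TA (SatLoc n) (Fin m) Unit (SatRule n) where
  initial := {ℓ | ∃ i : Fin n, ℓ = satStart i}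
  initial_nonempty := ⟨satStart ⟨0, hn⟩, ⟨0, hn⟩, rfl⟩
  rc := Set.univ
  N := fun p => p ()
  rule := satRule' C

/-- The initial configuration of `TA'_φ` with exactly one process in each initial location
`ℓ₁, …, ℓ_n` (parameter value `n`) and all shared variables equal to `0`. -/
def satInitConfig (n m : ℕ) : Config (SatLoc n) (Fin m) Unit where
  κ := fun ℓ => match ℓ with
    | Sum.inl _ => 1
    | _ => 0
  g := fun _ => 0
  p := fun _ => n

/-- A guard is a constant rise guard `x ≥ a₀` with `a₀ ∈ ℕ`. -/
def TGuard.IsConstantRise {V P : Type} (φ : TGuard V P) : Prop :=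
  φ.isRise = true ∧ (∀ i, φ.coef i = 0) ∧ ∃ a : ℕ, φ.a0 = a

/-- A threshold automaton is acyclic if its location graph has no cycle of rules. -/
def TA.Acyclic (ta : TA L V P R) : Prop :=
  ¬ ∃ (c : List R) (hne : c ≠ []),
      List.Chain' (fun a b => (ta.rule a).dst = (ta.rule b).src) c ∧
      (ta.rule (c.getLast hne)).dst = (ta.rule (c.head hne)).src

namespace SatAux

variable {L V P R : Type}

theorem Config.ext' {σ σ' : Config L V P} (hκ : σ.κ = σ'.κ) (hg : σ.g = σ'.g)
    (hp : σ.p = σ'.p) : σ = σ' := by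
  cases σ; cases σ'; simp_all

theorem fire_κ [DecidableEq L] (r : TRule L V P) (σ : Config L V P) (ℓ : L) :
    (r.fire σ).κ ℓ = σ.κ ℓ + (if ℓ = r.dst then 1 else 0) - (if ℓ = r.src then 1 else 0) :=
  rfl

theorem fire_g [DecidableEq L] (r : TRule L V P) (σ : Config L V P) (v : V) :
    (r.fire σ).g v = σ.g v + r.upd v := rfl

variable [Fintype P] [DecidableEq L]

theorem apply_append (ta : TA L V P R) (τ₁ τ₂ : List R) (σ : Config L V P) :
    ta.apply σ (τ₁ ++ τ₂) = ta.apply (ta.apply σ τ₁) τ₂ := by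
  induction τ₁ generalizing σ with
  | nil => rfl
  | cons r τ ih => simp [TA.apply, ih]

theorem applicable_append (ta : TA L V P R) (τ₁ τ₂ : List R) (σ : Config L V P) :
    ta.applicable σ (τ₁ ++ τ₂) ↔
      ta.applicable σ τ₁ ∧ ta.applicable (ta.apply σ τ₁) τ₂ := by
  induction τ₁ generalizing σ with
  | nil => simp [TA.applicable, TA.apply]
  | cons r τ ih => simp [TA.applicable, TA.apply, ih, and_assoc]

end SatAux
namespace SatAux

def rank {n : ℕ} : SatLoc n → ℕ
  | Sum.inl _ => 0
  | Sum.inr (Sum.inl _) => 1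
  | Sum.inr (Sum.inr (Sum.inl _)) => 1
  | Sum.inr (Sum.inr (Sum.inr x)) => 2 + x.1

theorem rank_lt {n m : ℕ} (C : Fin m → Fin 3 → Fin n × Bool) (r : SatRule n) :
    rank (satRule' C r).src < rank (satRule' C r).dst := by
  rcases r with i | i | i | i | u <;>
    simp [satRule', rank, satStart, satTop, satBot, satMid, satFin]

theorem chain_rank {n m : ℕ} (C : Fin m → Fin 3 → Fin n × Bool) :
    ∀ (c : List (SatRule n)) (hne : c ≠ []),
      List.Chain' (fun a b => (satRule' C a).dst = (satRule' C b).src) c →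
      rank (satRule' C (c.head hne)).src < rank (satRule' C (c.getLast hne)).dst := by
  intro c
  induction c with
  | nil => intro h; exact absurd rfl h
  | cons a t ih =>
    intro _ hch
    cases t with
    | nil => simpa using rank_lt C a
    | cons b t' =>
      have h1 : (satRule' C a).dst = (satRule' C b).src := hch.rel_head
      have h2 := ih (by simp) hch.tail
      have := rank_lt C a
      rw [List.getLast_cons (by simp)]
      simp only [List.head_cons] at h2 ⊢
      rw [h1] at this
      exact this.trans h2

theorem acyclic {n m : ℕ} (hn : 0 < n) (C : Fin m → Fin 3 → Fin n × Bool) :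
    (satTA' hn C).Acyclic := by
  rintro ⟨c, hne, hch, hcyc⟩
  have := chain_rank C c hne hch
  rw [show (satTA' hn C).rule = satRule' C from rfl] at hcyc
  rw [hcyc] at this
  exact lt_irrefl _ this

theorem guardsConstRise {n m : ℕ} (hn : 0 < n) (C : Fin m → Fin 3 → Fin n × Bool) :
    ∀ φ ∈ (satTA' hn C).guards, φ.IsConstantRise := by
  rintro φ ⟨r, hr⟩
  rcases r with i | i | i | i | u <;>
    simp [satTA', satRule', TA.guards] at hr
  obtain ⟨j, rfl⟩ := hr
  exact ⟨rfl, fun _ => rfl, 1, by simp [constGuard]⟩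

end SatAux
namespace SatAux

/-- Invariant for the backward direction. -/
def SatInv {n m : ℕ} (C : Fin m → Fin 3 → Fin n × Bool)
    (σ : Config (SatLoc n) (Fin m) Unit) : Prop :=
  (0 < σ.κ satFin → cnfSatisfiable C) ∧
  ∃ cT cB mT mB : Fin n → ℕ,
    (∀ i, cT i + cB i ≤ 1) ∧ (∀ i, mT i ≤ cT i) ∧ (∀ i, mB i ≤ cB i) ∧
    (∀ i, σ.κ (satStart i) + cT i + cB i = 1) ∧
    (∀ i, σ.κ (satTop i) + mT i = cT i) ∧
    (∀ i, σ.κ (satBot i) + mB i = cB i) ∧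
    (∀ j, σ.g j = ∑ i, (mT i * litUpd' C i true j + mB i * litUpd' C i false j))

theorem sat_of_counts {n m : ℕ} (C : Fin m → Fin 3 → Fin n × Bool)
    {cT cB mT mB : Fin n → ℕ}
    (h1 : ∀ i, cT i + cB i ≤ 1) (h2 : ∀ i, mT i ≤ cT i) (h3 : ∀ i, mB i ≤ cB i)
    (hg : ∀ j : Fin m,
      1 ≤ ∑ i, (mT i * litUpd' C i true j + mB i * litUpd' C i false j)) :
    cnfSatisfiable C := by
  refine ⟨fun i => decide (mT i = 1), fun j => ?_⟩
  have hj := hg j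
  have hex : ∃ i, 0 < mT i * litUpd' C i true j + mB i * litUpd' C i false j := by
    by_contra h
    push_neg at h
    have : ∑ i, (mT i * litUpd' C i true j + mB i * litUpd' C i false j) = 0 :=
      Finset.sum_eq_zero fun i _ => Nat.le_zero.mp (h i)
    omega
  obtain ⟨i, hi⟩ := hex
  by_cases hT : 0 < mT i * litUpd' C i true j
  · have hmT : 0 < mT i := by
      by_contra h
      simp [Nat.eq_zero_of_not_pos h] at hT
    have hu : ∃ t : Fin 3, C j t = (i, true) := by
      by_contra h
      rw [show litUpd' C i true j = 0 by unfold litUpd'; rw [if_neg h]] at hT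
      simp at hT
    have hT1 : mT i = 1 := by have := h2 i; have := h1 i; omega
    obtain ⟨t, ht⟩ := hu
    exact ⟨t, by simp [ht, hT1]⟩
  · have hB : 0 < mB i * litUpd' C i false j := by omega
    have hmB : 0 < mB i := by
      by_contra h
      simp [Nat.eq_zero_of_not_pos h] at hB
    have hu : ∃ t : Fin 3, C j t = (i, false) := by
      by_contra h
      rw [show litUpd' C i false j = 0 by unfold litUpd'; rw [if_neg h]] at hB
      simp at hB
    have hT0 : mT i = 0 := by have := h1 i; have := h2 i; have := h3 i; omega
    obtain ⟨t, ht⟩ := hu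
    exact ⟨t, by simp [ht, hT0]⟩

end SatAux
namespace SatAux

@[simp] theorem fin2_01 : (0 : Fin 2) ≠ 1 := by decide
@[simp] theorem fin2_10 : (1 : Fin 2) ≠ 0 := by decide

theorem sum_shift {n : ℕ} (i : Fin n) (g g' : Fin n → ℕ) (d : ℕ)
    (hne : ∀ i', i' ≠ i → g' i' = g i') (hgi : g' i = g i + d) :
    ∑ i', g' i' = (∑ i', g i') + d := by
  rw [← Finset.add_sum_erase Finset.univ g' (Finset.mem_univ i),
      ← Finset.add_sum_erase Finset.univ g (Finset.mem_univ i), hgi,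
      Finset.sum_congr rfl fun x hx => hne x (Finset.ne_of_mem_erase hx)]
  ring

theorem inv_step {n m : ℕ} (C : Fin m → Fin 3 → Fin n × Bool) (r : SatRule n)
    (σ : Config (SatLoc n) (Fin m) Unit) (h : SatInv C σ)
    (he : (satRule' C r).enabledAt σ) : SatInv C ((satRule' C r).fire σ) := by
  obtain ⟨hfin, cT, cB, mT, mB, h1, h2, h3, h4, h5, h6, h7⟩ := h
  obtain ⟨hsrc, hg⟩ := he
  simp only [satRule', satStart, satTop, satBot, satMid, satFin] at hsrc h4 h5 h6 hfin ⊢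
  rcases r with i | i | i | i | u
  · -- ℓ_i → ⊤_i
    simp only [satRule', satStart, satTop] at hsrc
    have hf : cT i = 0 ∧ cB i = 0 ∧ σ.κ (Sum.inl i) = 1 := by have := h4 i; omega
    refine ⟨?_, fun i' => if i' = i then 1 else cT i', cB, mT, mB, fun i' => ?_,
      fun i' => ?_, h3, fun i' => ?_, fun i' => ?_, fun i' => ?_, fun j => ?_⟩
    · simpa [fire_κ, satRule', satStart, satTop, satBot, satMid, satFin] using hfin
    · by_cases hii : i' = i <;> simp [hii]
      · omega
      · exact h1 i'
    · by_cases hii : i' = i <;> simp [hii]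
      · have := h2 i; omega
      · exact h2 i'
    · have ha := h4 i'
      by_cases hii : i' = i <;> simp [fire_κ, satRule', satStart, satTop, satBot, satMid, satFin, hii] <;> omega
    · have ha := h5 i'; have hb := h5 i
      by_cases hii : i' = i <;> simp [fire_κ, satRule', satStart, satTop, satBot, satMid, satFin, hii] <;> omega
    · have ha := h6 i'
      simp [fire_κ, satRule', satStart, satTop, satBot, satMid, satFin]
      omega
    · simpa [fire_g, satRule'] using h7 j
  · -- ℓ_i → ⊥_i
    simp only [satRule', satStart, satBot] at hsrc
    have hf : cT i = 0 ∧ cB i = 0 ∧ σ.κ (Sum.inl i) = 1 := by have := h4 i; omega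
    refine ⟨?_, cT, fun i' => if i' = i then 1 else cB i', mT, mB, fun i' => ?_,
      h2, fun i' => ?_, fun i' => ?_, fun i' => ?_, fun i' => ?_, fun j => ?_⟩
    · simpa [fire_κ, satRule', satStart, satTop, satBot, satMid, satFin] using hfin
    · by_cases hii : i' = i <;> simp [hii]
      · omega
      · exact h1 i'
    · by_cases hii : i' = i <;> simp [hii]
      · have := h3 i; omega
      · exact h3 i'
    · have ha := h4 i'
      by_cases hii : i' = i <;> simp [fire_κ, satRule', satStart, satTop, satBot, satMid, satFin, hii] <;> omega
    · have ha := h5 i'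
      simp [fire_κ, satRule', satStart, satTop, satBot, satMid, satFin]
      omega
    · have ha := h6 i'; have hb := h6 i
      by_cases hii : i' = i <;> simp [fire_κ, satRule', satStart, satTop, satBot, satMid, satFin, hii] <;> omega
    · simpa [fire_g, satRule'] using h7 j
  · -- ⊤_i → ℓ_mid
    simp only [satRule', satTop, satMid] at hsrc
    have hf : cT i = 1 ∧ mT i = 0 ∧ σ.κ (Sum.inr (Sum.inl i)) = 1 ∧ cB i = 0 := by
      have := h5 i; have := h1 i; have := h2 i; omega
    refine ⟨?_, cT, cB, fun i' => if i' = i then 1 else mT i', mB, h1, fun i' => ?_,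
      h3, fun i' => ?_, fun i' => ?_, fun i' => ?_, fun j => ?_⟩
    · simpa [fire_κ, satRule', satStart, satTop, satBot, satMid, satFin] using hfin
    · by_cases hii : i' = i <;> simp [hii]
      · omega
      · exact h2 i'
    · have ha := h4 i'
      simp [fire_κ, satRule', satStart, satTop, satBot, satMid, satFin]
      omega
    · have ha := h5 i'
      by_cases hii : i' = i <;> simp [fire_κ, satRule', satStart, satTop, satBot, satMid, satFin, hii] <;> omega
    · have ha := h6 i'
      simp [fire_κ, satRule', satStart, satTop, satBot, satMid, satFin]
      omega
    · simp only [fire_g, satRule']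
      rw [h7 j]
      refine (sum_shift i _ _ (litUpd' C i true j) (fun i' hii => by simp [hii]) ?_).symm
      simp [hf.2.1]
      try omega
  · -- ⊥_i → ℓ_mid
    simp only [satRule', satBot, satMid] at hsrc
    have hf : cB i = 1 ∧ mB i = 0 ∧ σ.κ (Sum.inr (Sum.inr (Sum.inl i))) = 1 ∧ cT i = 0 := by
      have := h6 i; have := h1 i; have := h3 i; omega
    refine ⟨?_, cT, cB, mT, fun i' => if i' = i then 1 else mB i', h1, h2,
      fun i' => ?_, fun i' => ?_, fun i' => ?_, fun i' => ?_, fun j => ?_⟩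
    · simpa [fire_κ, satRule', satStart, satTop, satBot, satMid, satFin] using hfin
    · by_cases hii : i' = i <;> simp [hii]
      · omega
      · exact h3 i'
    · have ha := h4 i'
      simp [fire_κ, satRule', satStart, satTop, satBot, satMid, satFin]
      omega
    · have ha := h5 i'
      simp [fire_κ, satRule', satStart, satTop, satBot, satMid, satFin]
      omega
    · have ha := h6 i'
      by_cases hii : i' = i <;> simp [fire_κ, satRule', satStart, satTop, satBot, satMid, satFin, hii] <;> omega
    · simp only [fire_g, satRule']
      rw [h7 j]
      refine (sum_shift i _ _ (litUpd' C i false j) (fun i' hii => by simp [hii]) ?_).symm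
      simp [hf.2.1]
      try omega
  · -- ℓ_mid → ℓ_F
    have hgj : ∀ j : Fin m, 1 ≤ σ.g j := by
      intro j
      have hm : constGuard (P := Unit) true j (1 : ℚ) ∈ (satRule' C
          (Sum.inr (Sum.inr (Sum.inr (Sum.inr u))))).guard := by
        simp only [satRule', List.mem_map]
        exact ⟨j, List.mem_finRange j, rfl⟩
      have hh := hg _ hm
      simp only [TGuard.holds, constGuard, if_true] at hh
      simp at hh
      exact_mod_cast hh
    have hsat : cnfSatisfiable C :=
      sat_of_counts C h1 h2 h3 fun j => by rw [← h7 j]; exact hgj j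
    refine ⟨fun _ => hsat, cT, cB, mT, mB, h1, h2, h3, fun i' => ?_, fun i' => ?_,
      fun i' => ?_, fun j => ?_⟩
    · have ha := h4 i'
      simp [fire_κ, satRule', satStart, satTop, satBot, satMid, satFin]
      omega
    · have ha := h5 i'
      simp [fire_κ, satRule', satStart, satTop, satBot, satMid, satFin]
      omega
    · have ha := h6 i'
      simp [fire_κ, satRule', satStart, satTop, satBot, satMid, satFin]
      omega
    · simpa [fire_g, satRule'] using h7 j

end SatAux
namespace SatAux

theorem inv_apply {n m : ℕ} (hn : 0 < n) (C : Fin m → Fin 3 → Fin n × Bool) :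
    ∀ (τ : List (SatRule n)) (σ : Config (SatLoc n) (Fin m) Unit), SatInv C σ →
      (satTA' hn C).applicable σ τ → SatInv C ((satTA' hn C).apply σ τ) := by
  intro τ
  induction τ with
  | nil => intro σ h _; exact h
  | cons r τ ih =>
    intro σ h happ
    exact ih _ (inv_step C r σ h happ.1) happ.2

theorem inv_init {n m : ℕ} (C : Fin m → Fin 3 → Fin n × Bool) :
    SatInv C (satInitConfig n m) := by
  refine ⟨fun h => absurd h (by simp [satInitConfig, satFin]), 0, 0, 0, 0,
    fun i => by simp, fun i => le_refl _, fun i => le_refl _,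
    fun i => by simp [satInitConfig, satStart], fun i => by simp [satInitConfig, satTop],
    fun i => by simp [satInitConfig, satBot], fun j => by simp [satInitConfig]⟩

theorem backward {n m : ℕ} (hn : 0 < n) (C : Fin m → Fin 3 → Fin n × Bool)
    (h : ∃ τ : List (SatRule n),
      (satTA' hn C).applicable (satInitConfig n m) τ ∧
      0 < ((satTA' hn C).apply (satInitConfig n m) τ).κ satFin) :
    cnfSatisfiable C := by
  obtain ⟨τ, happ, hκ⟩ := h
  exact (inv_apply hn C τ _ (inv_init C) happ).1 hκ

end SatAux
namespace SatAux

def chooseRule {n : ℕ} (v : Fin n → Bool) (i : Fin n) : SatRule n :=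
  if v i then Sum.inl i else Sum.inr (Sum.inl i)

def moveRule {n : ℕ} (v : Fin n → Bool) (i : Fin n) : SatRule n :=
  if v i then Sum.inr (Sum.inr (Sum.inl i)) else Sum.inr (Sum.inr (Sum.inr (Sum.inl i)))

/-- Configuration after moving the processes of the variables in `l` to `ℓ_mid`. -/
def midCfg (n m : ℕ) (C : Fin m → Fin 3 → Fin n × Bool) (v : Fin n → Bool)
    (l : List (Fin n)) : Config (SatLoc n) (Fin m) Unit where
  κ := fun ℓ => match ℓ with
    | Sum.inl i => if i ∈ l then 0 else 1
    | Sum.inr (Sum.inr (Sum.inr x)) => if x = 0 then l.length else 0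
    | _ => 0
  g := fun j => (l.map fun i => litUpd' C i (v i) j).sum
  p := fun _ => n

theorem midCfg_nil {n m : ℕ} (C : Fin m → Fin 3 → Fin n × Bool) (v : Fin n → Bool) :
    midCfg n m C v [] = satInitConfig n m := by
  refine Config.ext' (funext fun ℓ => ?_) (funext fun j => ?_) rfl
  · rcases ℓ with i | i | i | x <;> simp [midCfg, satInitConfig]
  · simp [midCfg, satInitConfig]

def sched {n : ℕ} (v : Fin n → Bool) (l : List (Fin n)) : List (SatRule n) :=
  l.flatMap fun i => [chooseRule v i, moveRule v i]

set_option maxHeartbeats 1000000 in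
theorem fw {n m : ℕ} (hn : 0 < n) (C : Fin m → Fin 3 → Fin n × Bool) (v : Fin n → Bool) :
    ∀ (r l : List (Fin n)), (∀ i ∈ r, i ∉ l) → r.Nodup →
      (satTA' hn C).applicable (midCfg n m C v l) (sched v r) ∧
      (satTA' hn C).apply (midCfg n m C v l) (sched v r) = midCfg n m C v (l ++ r) := by
  intro r
  induction r with
  | nil => intro l _ _; exact ⟨trivial, by simp [sched, TA.apply]⟩
  | cons i r ih =>
    intro l hd hnd
    have hil : i ∉ l := hd i (by simp)
    have hstep : (satRule' C (moveRule v i)).fire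
        ((satRule' C (chooseRule v i)).fire (midCfg n m C v l)) = midCfg n m C v (l ++ [i]) := by
      refine Config.ext' (funext fun ℓ => ?_) (funext fun j => ?_) rfl
      · rcases ℓ with i' | i' | i' | x
        · by_cases hv : v i <;> by_cases hii : i' = i <;>
            simp [fire_κ, chooseRule, moveRule, satRule', midCfg, satStart, satTop,
              satBot, satMid, satFin, hv, hii, hil]
        · by_cases hv : v i <;> by_cases hii : i' = i <;>
            simp [fire_κ, chooseRule, moveRule, satRule', midCfg, satStart, satTop,
              satBot, satMid, satFin, hv, hii, hil]
        · by_cases hv : v i <;> by_cases hii : i' = i <;>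
            simp [fire_κ, chooseRule, moveRule, satRule', midCfg, satStart, satTop,
              satBot, satMid, satFin, hv, hii, hil]
        · by_cases hx : x = 0 <;> by_cases hv : v i <;>
            simp [fire_κ, chooseRule, moveRule, satRule', midCfg, satStart, satTop,
              satBot, satMid, satFin, hv, hx]
      · by_cases hv : v i <;>
          simp [fire_g, chooseRule, moveRule, satRule', midCfg, hv]
    have hen1 : (satRule' C (chooseRule v i)).enabledAt (midCfg n m C v l) := by
      constructor
      · by_cases hv : v i <;> simp [chooseRule, satRule', midCfg, satStart, hv, hil]
      · by_cases hv : v i <;> simp [chooseRule, satRule', hv]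
    have hen2 : (satRule' C (moveRule v i)).enabledAt
        ((satRule' C (chooseRule v i)).fire (midCfg n m C v l)) := by
      constructor
      · by_cases hv : v i <;>
          simp [chooseRule, moveRule, satRule', midCfg, fire_κ, satStart, satTop,
            satBot, hv, hil]
      · by_cases hv : v i <;> simp [chooseRule, moveRule, satRule', hv]
    have hd' : ∀ i' ∈ r, i' ∉ l ++ [i] := by
      intro i' hi'
      simp only [List.mem_append, List.mem_singleton]
      push_neg
      exact ⟨hd i' (by simp [hi']), fun h => (List.nodup_cons.mp hnd).1 (h ▸ hi')⟩
    obtain ⟨iha, ihe⟩ := ih (l ++ [i]) hd' (List.nodup_cons.mp hnd).2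
    have hsch : sched v (i :: r) = chooseRule v i :: moveRule v i :: sched v r := by
      simp [sched]
    rw [hsch]
    constructor
    · show _ ∧ _
      refine ⟨hen1, ?_⟩
      show _ ∧ _
      refine ⟨hen2, ?_⟩
      show (satTA' hn C).applicable ((satRule' C (moveRule v i)).fire
        ((satRule' C (chooseRule v i)).fire (midCfg n m C v l))) (sched v r)
      rw [hstep]
      exact iha
    · show (satTA' hn C).apply ((satRule' C (moveRule v i)).fire
        ((satRule' C (chooseRule v i)).fire (midCfg n m C v l))) (sched v r) = _
      rw [hstep, ihe, List.append_assoc]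
      rfl
end SatAux
namespace SatAux

theorem forward {n m : ℕ} (hn : 0 < n) (C : Fin m → Fin 3 → Fin n × Bool)
    (h : cnfSatisfiable C) :
    ∃ τ : List (SatRule n), (satTA' hn C).applicable (satInitConfig n m) τ ∧
      0 < ((satTA' hn C).apply (satInitConfig n m) τ).κ satFin := by
  obtain ⟨v, hv⟩ := h
  obtain ⟨ha, he⟩ := fw hn C v (List.finRange n) [] (by simp) (List.nodup_finRange n)
  rw [midCfg_nil] at ha he
  simp only [List.nil_append] at he
  have hg1 : ∀ j : Fin m, 1 ≤ (midCfg n m C v (List.finRange n)).g j := by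
    intro j
    obtain ⟨t, ht⟩ := hv j
    have hlit : litUpd' C (C j t).1 (v (C j t).1) j = 1 := by
      unfold litUpd'
      rw [if_pos ⟨t, by rw [ht]⟩]
    show 1 ≤ ((List.finRange n).map fun i => litUpd' C i (v i) j).sum
    exact le_of_eq_of_le hlit.symm
      (List.single_le_sum (fun x _ => Nat.zero_le x) _
        (List.mem_map.mpr ⟨(C j t).1, List.mem_finRange _, rfl⟩))
  have hen : (satRule' C (Sum.inr (Sum.inr (Sum.inr (Sum.inr ()))))).enabledAt
      (midCfg n m C v (List.finRange n)) := by
    constructor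
    · show 0 < (midCfg n m C v (List.finRange n)).κ satMid
      simpa [midCfg, satMid] using hn
    · intro φ hφ
      simp only [satRule', List.mem_map] at hφ
      obtain ⟨j, _, rfl⟩ := hφ
      simp only [TGuard.holds, constGuard, if_true]
      have := hg1 j
      have h2 : (1 : ℚ) ≤ ((midCfg n m C v (List.finRange n)).g j : ℚ) := by
        exact_mod_cast this
      simpa using h2
  refine ⟨sched v (List.finRange n) ++ [Sum.inr (Sum.inr (Sum.inr (Sum.inr ())))], ?_, ?_⟩
  · rw [applicable_append]
    refine ⟨ha, ?_⟩
    rw [he]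
    exact ⟨hen, trivial⟩
  · rw [apply_append, he]
    show 0 < ((satRule' C (Sum.inr (Sum.inr (Sum.inr (Sum.inr ()))))).fire
      (midCfg n m C v (List.finRange n))).κ satFin
    simp [fire_κ, satRule', satFin, satMid, midCfg]

theorem satIff {n m : ℕ} (hn : 0 < n) (C : Fin m → Fin 3 → Fin n × Bool) :
    cnfSatisfiable C ↔
      ∃ τ : List (SatRule n),
        (satTA' hn C).applicable (satInitConfig n m) τ ∧
        0 < ((satTA' hn C).apply (satInitConfig n m) τ).κ satFin :=
  ⟨forward hn C, backward hn C⟩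

end SatAux
/-- A 3-CNF formula `φ` is satisfiable iff there is a schedule applicable to the initial
configuration `σ₀` of `TA'_φ` (one process per initial location) covering `ℓ_F`; moreover
all guards of `TA'_φ` are constant rise guards and `TA'_φ` is acyclic. -/
theorem cnf_satisfiable_iff_coverable' {n m : ℕ} (hn : 0 < n)
    (C : Fin m → Fin 3 → Fin n × Bool) :
    (cnfSatisfiable C ↔
      ∃ τ : List (SatRule n),
        (satTA' hn C).applicable (satInitConfig n m) τ ∧
        0 < ((satTA' hn C).apply (satInitConfig n m) τ).κ satFin) ∧
    (∀ φ ∈ (satTA' hn C).guards, φ.IsConstantRise) ∧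
    (satTA' hn C).Acyclic := by
  exact ⟨SatAux.satIff hn C, SatAux.guardsConstRise hn C, SatAux.acyclic hn C⟩
end

section
/- Let TA be a threshold automaton over a multiplicative environment such that every guard of every rule is a constant rise guard x ≥ a₀ with a₀ ∈ ℕ, a₀ > 0, and let (X_L, X_R) be the saturation fixpoint of TA. Then every coverable location of TA belongs to X_L and every rule of TA that can possibly occur belongs to X_R. -/
variable {L V P R : Type}

/-- Satisfaction of a threshold guard by rational values `y` (for the shared variable) and
`q` (for the parameters). -/
def TGuard.holdsQ [Fintype P] (φ : TGuard V P) (y : ℚ) (q : P → ℚ) : Prop :=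
  if φ.isRise then φ.a0 + ∑ i : P, φ.coef i * q i ≤ y
  else y < φ.a0 + ∑ i : P, φ.coef i * q i

/-- Scalar multiple `μ·σ` of a configuration. -/
def Config.smul (μ : ℕ) (σ : Config L V P) : Config L V P :=
  ⟨fun ℓ => μ * σ.κ ℓ, fun v => μ * σ.g v, fun i => μ * σ.p i⟩

/-- The environment is multiplicative for the automaton: for every `μ > 0`, the resilience
condition and `N` scale by `μ`, and rational solutions of every guard of the automaton are
preserved under scaling by `μ`. -/
def TA.Multiplicative [Fintype P] (ta : TA L V P R) : Prop :=
  ∀ μ : ℕ, 0 < μ →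
    (∀ p ∈ ta.rc, (fun i => μ * p i) ∈ ta.rc ∧ ta.N (fun i => μ * p i) = μ * ta.N p) ∧
    (∀ φ ∈ ta.guards, ∀ (y : ℚ) (q : P → ℚ),
      φ.holdsQ y q → φ.holdsQ (μ * y) (fun i => μ * q i))

/-- One step of the saturation procedure on the set of rules: a rule `r` is added if its
source location is already known reachable (initial, or target of a rule in `X`) and for
every guard `x ≥ c` of `r` there is a rule in `X` incrementing `x`.  (For a rule with
trivial guard the second condition is vacuous.) -/
def TA.satStep (ta : TA L V P R) (X : Set R) : Set R :=
  {r | ((ta.rule r).src ∈ ta.initial ∨ ∃ r' ∈ X, (ta.rule r').dst = (ta.rule r).src) ∧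
       ∀ φ ∈ (ta.rule r).guard, ∃ r' ∈ X, 0 < (ta.rule r').upd φ.var}

/-- `X_R`: the least set of rules closed under the saturation step. -/
def TA.saturR (ta : TA L V P R) : Set R :=
  ⋂₀ {X : Set R | ta.satStep X ⊆ X}

/-- `X_L`: the initial locations together with the targets of the rules in `X_R`. -/
def TA.saturL (ta : TA L V P R) : Set L :=
  ta.initial ∪ {ℓ | ∃ r ∈ ta.saturR, (ta.rule r).dst = ℓ}

/-- A location is coverable. -/
def TA.coverable [Fintype P] [DecidableEq L] [Fintype L] (ta : TA L V P R) (ℓ : L) : Prop :=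
  ∃ σ₀ σ : Config L V P, ta.isInitial σ₀ ∧ ta.reaches σ₀ σ ∧ 0 < σ.κ ℓ

/-- A rule can possibly occur. -/
def TA.canOccur [Fintype P] [DecidableEq L] [Fintype L] (ta : TA L V P R) (r : R) : Prop :=
  ∃ σ₀ σ : Config L V P, ta.isInitial σ₀ ∧ ta.reaches σ₀ σ ∧ (ta.rule r).enabledAt σ

/-- For a threshold automaton over a multiplicative environment all of whose guards are
constant rise guards `x ≥ a₀` with `a₀ ∈ ℕ`, `a₀ > 0`: every coverable location belongs to
the saturation fixpoint `X_L` and every rule that can possibly occur belongs to `X_R`. -/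
theorem saturation_complete [Fintype P] [DecidableEq L] [Fintype L]
    (ta : TA L V P R) (hmult : ta.Multiplicative)
    (hg : ∀ φ ∈ ta.guards,
      φ.isRise = true ∧ (∀ i, φ.coef i = 0) ∧ ∃ a : ℕ, 0 < a ∧ φ.a0 = a) :
    (∀ ℓ : L, ta.coverable ℓ → ℓ ∈ ta.saturL) ∧
    (∀ r : R, ta.canOccur r → r ∈ ta.saturR) := by
  clear hmult
  -- satStep is monotone
  have hmono : ∀ X Y : Set R, X ⊆ Y → ta.satStep X ⊆ ta.satStep Y := by
    intro X Y hXY r hr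
    obtain ⟨h1, h2⟩ := hr
    refine ⟨?_, ?_⟩
    · rcases h1 with h | ⟨r', hr', hd⟩
      · exact Or.inl h
      · exact Or.inr ⟨r', hXY hr', hd⟩
    · intro φ hφ
      obtain ⟨r', hr', hu⟩ := h2 φ hφ
      exact ⟨r', hXY hr', hu⟩
  -- saturR is closed under satStep
  have hclosed : ta.satStep ta.saturR ⊆ ta.saturR := by
    intro r hr
    rw [TA.saturR, Set.mem_sInter]
    intro X hX
    refine hX (hmono _ X ?_ hr)
    intro s hs
    exact (Set.mem_sInter.mp hs) X hX
  -- guards of an enabled rule force positive shared variables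
  have hguard : ∀ (rr : R) (σ : Config L V P), (ta.rule rr).enabledAt σ →
      ∀ φ ∈ (ta.rule rr).guard, 0 < σ.g φ.var := by
    intro rr σ hen φ hφ
    obtain ⟨hrise, hcoef, a, ha, ha0⟩ := hg φ ⟨rr, hφ⟩
    have hh := hen.2 φ hφ
    rw [TGuard.holds] at hh
    simp only [hrise, if_true, ha0] at hh
    have hsum : ∑ i : P, φ.coef i * (σ.p i : ℚ) = 0 := by
      apply Finset.sum_eq_zero
      intro i _
      simp [hcoef i]
    rw [hsum, add_zero] at hh
    have : (0:ℚ) < (σ.g φ.var : ℚ) := lt_of_lt_of_le (by exact_mod_cast ha) hh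
    exact_mod_cast this
  -- one-step lemma
  have step : ∀ (σ : Config L V P) (rr : R),
      (∀ ℓ, 0 < σ.κ ℓ → ℓ ∈ ta.initial ∨ ∃ r' ∈ ta.saturR, (ta.rule r').dst = ℓ) →
      (∀ v, 0 < σ.g v → ∃ r' ∈ ta.saturR, 0 < (ta.rule r').upd v) →
      (ta.rule rr).enabledAt σ → rr ∈ ta.saturR := by
    intro σ rr hκ hgv hen
    exact hclosed ⟨hκ _ hen.1, fun φ hφ => hgv _ (hguard rr σ hen φ hφ)⟩
  -- invariant propagation along a schedule
  have main : ∀ (τ : List R) (σ : Config L V P),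
      (∀ ℓ, 0 < σ.κ ℓ → ℓ ∈ ta.initial ∨ ∃ r' ∈ ta.saturR, (ta.rule r').dst = ℓ) →
      (∀ v, 0 < σ.g v → ∃ r' ∈ ta.saturR, 0 < (ta.rule r').upd v) →
      ta.applicable σ τ →
      (∀ ℓ, 0 < (ta.apply σ τ).κ ℓ → ℓ ∈ ta.initial ∨
        ∃ r' ∈ ta.saturR, (ta.rule r').dst = ℓ) ∧
      (∀ v, 0 < (ta.apply σ τ).g v → ∃ r' ∈ ta.saturR, 0 < (ta.rule r').upd v) := by
    intro τ
    induction τ with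
    | nil => intro σ h1 h2 _; exact ⟨h1, h2⟩
    | cons rr τ ih =>
      intro σ h1 h2 happ
      obtain ⟨hen, happ'⟩ := happ
      have hrr : rr ∈ ta.saturR := step σ rr h1 h2 hen
      refine ih _ ?_ ?_ happ'
      · intro ℓ hℓ
        by_cases hd : ℓ = (ta.rule rr).dst
        · exact Or.inr ⟨rr, hrr, hd.symm⟩
        · apply h1
          simp only [TRule.fire] at hℓ
          split_ifs at hℓ <;> omega
      · intro v hv
        simp only [TRule.fire] at hv
        rcases Nat.eq_zero_or_pos ((ta.rule rr).upd v) with h0 | hpos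
        · exact h2 v (by omega)
        · exact ⟨rr, hrr, hpos⟩
  -- initial configurations satisfy the invariant
  have hinit_inv : ∀ σ₀ : Config L V P, ta.isInitial σ₀ →
      (∀ ℓ, 0 < σ₀.κ ℓ → ℓ ∈ ta.initial ∨ ∃ r' ∈ ta.saturR, (ta.rule r').dst = ℓ) ∧
      (∀ v, 0 < σ₀.g v → ∃ r' ∈ ta.saturR, 0 < (ta.rule r').upd v) := by
    intro σ₀ hinit
    constructor
    · intro ℓ hℓ
      by_contra h
      push_neg at h
      have := hinit.2.1 ℓ h.1
      omega
    · intro v hv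
      have := hinit.2.2 v
      omega
  constructor
  · intro ℓ ⟨σ₀, σ, hinit, ⟨τ, happ, heq⟩, hpos⟩
    obtain ⟨h1, h2⟩ := hinit_inv σ₀ hinit
    obtain ⟨h1', _⟩ := main τ σ₀ h1 h2 happ
    rw [heq] at h1'
    rcases h1' ℓ hpos with h | ⟨r', hr', hd⟩
    · exact Or.inl h
    · exact Or.inr ⟨r', hr', hd⟩
  · intro r ⟨σ₀, σ, hinit, ⟨τ, happ, heq⟩, hen⟩
    obtain ⟨h1, h2⟩ := hinit_inv σ₀ hinit
    obtain ⟨h1', h2'⟩ := main τ σ₀ h1 h2 happ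
    rw [heq] at h1' h2'
    exact step σ r h1' h2' hen
end

section
/- Let TA be a threshold automaton over an environment Env that is multiplicative for TA. If τ is a steady schedule applicable to a configuration σ with τ(σ) = σ', then for every positive integer μ, the μ-fold concatenation μ·τ = τ·τ·…·τ (μ times) is applicable to the configuration μ·σ and (μ·τ)(μ·σ) = μ·σ'. -/
variable {L V P R : Type}

/-!
Along a steady run from `σ` to `σ'` the context is constant, so a guard of the automaton that
holds anywhere on the run holds at both `σ` and `σ'`, hence, by multiplicativity, at `μ • σ`
and at `μ • σ'`. The `(k+1)`-st copy of `τ` in `μ • τ` is the run of `τ` from `σ` with the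
frame `(μ - 1 - k) • σ + k • σ'` added to every configuration. Firing commutes with adding a
frame, and since shared variables only grow along the run, the framed configurations have
their shared variables between those of `μ • σ` and `μ • σ'`. A threshold guard satisfied at two
values of its variable is satisfied at every value in between, so every rule of the copy
remains enabled.
-/

attribute [ext] Config

namespace Config

instance : Zero (Config L V P) := ⟨⟨0, 0, 0⟩⟩

instance : Add (Config L V P) := ⟨fun x y => ⟨x.κ + y.κ, x.g + y.g, x.p + y.p⟩⟩

instance : SMul ℕ (Config L V P) := ⟨Config.smul⟩

instance : AddCommMonoid (Config L V P) :=
  Function.Injective.addCommMonoid (fun x : Config L V P => (x.κ, x.g, x.p))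
    (fun x y h => by cases x; cases y; simp_all) rfl (fun _ _ => rfl) (fun _ _ => rfl)

@[simp] theorem add_κ (x y : Config L V P) : (x + y).κ = x.κ + y.κ := rfl
@[simp] theorem add_g (x y : Config L V P) : (x + y).g = x.g + y.g := rfl
@[simp] theorem add_p (x y : Config L V P) : (x + y).p = x.p + y.p := rfl
@[simp] theorem smul_g (n : ℕ) (x : Config L V P) : (n • x).g = n • x.g := rfl
@[simp] theorem smul_p (n : ℕ) (x : Config L V P) : (n • x).p = n • x.p := rfl

end Config

namespace TGuard

variable [Fintype P]

theorem holds_of_le_of_le {φ : TGuard V P} {g₁ g₂ g : V → ℕ} {p : P → ℕ}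
    (h₁ : φ.holds g₁ p) (h₂ : φ.holds g₂ p) (hg₁ : g₁ φ.var ≤ g φ.var)
    (hg₂ : g φ.var ≤ g₂ φ.var) : φ.holds g p := by
  have hg₁' : (g₁ φ.var : ℚ) ≤ g φ.var := by exact_mod_cast hg₁
  have hg₂' : (g φ.var : ℚ) ≤ g₂ φ.var := by exact_mod_cast hg₂
  unfold holds at *
  split_ifs at * <;> linarith

theorem holds_smul {φ : TGuard V P} {μ : ℕ}
    (hφ : ∀ (y : ℚ) (q : P → ℚ), φ.holdsQ y q → φ.holdsQ (μ * y) (fun i => μ * q i))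
    {g : V → ℕ} {p : P → ℕ} (h : φ.holds g p) : φ.holds (μ • g) (μ • p) := by
  simpa [holds, holdsQ] using hφ (g φ.var) (fun i => p i) h

end TGuard

namespace TRule

variable [DecidableEq L]

theorem le_fire_g (r : TRule L V P) (σ : Config L V P) : σ.g ≤ (r.fire σ).g :=
  fun _ => Nat.le_add_right _ _

theorem fire_add (r : TRule L V P) {x : Config L V P} (hx : 0 < x.κ r.src)
    (δ : Config L V P) : r.fire (x + δ) = r.fire x + δ := by
  ext ℓ
  · simp only [fire, Config.add_κ, Pi.add_apply]
    rcases eq_or_ne ℓ r.src with rfl | h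
    · split_ifs <;> omega
    · simp only [if_neg h]
      omega
  · simp only [fire, Config.add_g, Pi.add_apply]
    ac_rfl
  · rfl

end TRule

namespace TA

section

variable [Fintype P] (ta : TA L V P R)

def ScalesGuards (μ : ℕ) : Prop :=
  ∀ φ ∈ ta.guards, ∀ (y : ℚ) (q : P → ℚ), φ.holdsQ y q → φ.holdsQ (μ * y) (fun i => μ * q i)

theorem holds_iff_of_context_eq {σ γ : Config L V P} (h : ta.context γ = ta.context σ)
    {φ : TGuard V P} (hφ : φ ∈ ta.guards) : φ.holds γ.g γ.p ↔ φ.holds σ.g σ.p := by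
  have hmem := Set.ext_iff.1 h φ
  simp only [context, Set.mem_ofPred_eq, hφ, true_and] at hmem
  cases hr : φ.isRise <;> simpa [hr, not_iff_not] using hmem

end

variable [DecidableEq L] (ta : TA L V P R)

theorem apply_append (σ : Config L V P) (τ₁ τ₂ : List R) :
    ta.apply σ (τ₁ ++ τ₂) = ta.apply (ta.apply σ τ₁) τ₂ := by
  induction τ₁ generalizing σ with
  | nil => rfl
  | cons r τ₁ ih => exact ih _

theorem apply_mem_visited (σ : Config L V P) (τ : List R) : ta.apply σ τ ∈ ta.visited σ τ := by
  induction τ generalizing σ with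
  | nil => simp [apply, visited]
  | cons r τ ih => exact List.mem_cons_of_mem _ (ih _)

theorem le_apply_g (σ : Config L V P) (τ : List R) : σ.g ≤ (ta.apply σ τ).g := by
  induction τ generalizing σ with
  | nil => exact le_rfl
  | cons r τ ih => exact ((ta.rule r).le_fire_g σ).trans (ih _)

theorem p_eq_of_mem_visited {σ γ : Config L V P} {τ : List R} (hγ : γ ∈ ta.visited σ τ) :
    γ.p = σ.p := by
  induction τ generalizing σ with
  | nil => simp_all [visited]
  | cons r τ ih =>
    rcases List.mem_cons.1 hγ with rfl | hγ
    · rfl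
    · exact (ih hγ :)

theorem g_mem_Icc_of_mem_visited {σ γ : Config L V P} {τ : List R}
    (hγ : γ ∈ ta.visited σ τ) : γ.g ∈ Set.Icc σ.g (ta.apply σ τ).g := by
  induction τ generalizing σ with
  | nil => simp_all [visited, apply]
  | cons r τ ih =>
    rcases List.mem_cons.1 hγ with rfl | hγ
    · exact ⟨le_rfl, ta.le_apply_g γ (r :: τ)⟩
    · obtain ⟨h₁, h₂⟩ := ih hγ
      exact ⟨((ta.rule r).le_fire_g σ).trans h₁, h₂⟩

variable [Fintype P]

theorem applicable_append {σ : Config L V P} {τ₁ τ₂ : List R} :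
    ta.applicable σ (τ₁ ++ τ₂) ↔ ta.applicable σ τ₁ ∧ ta.applicable (ta.apply σ τ₁) τ₂ := by
  induction τ₁ generalizing σ with
  | nil => simp [applicable, apply]
  | cons r τ₁ ih => simp [applicable, apply, ih, and_assoc]

theorem applicable_add_and_apply_add {x δ : Config L V P} {τ : List R}
    (happ : ta.applicable x τ)
    (hguards : ∀ γ ∈ ta.visited x τ, ∀ φ ∈ ta.guards,
      φ.holds γ.g γ.p → φ.holds (γ + δ).g (γ + δ).p) :
    ta.applicable (x + δ) τ ∧ ta.apply (x + δ) τ = ta.apply x τ + δ := by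
  induction τ generalizing x with
  | nil => exact ⟨trivial, rfl⟩
  | cons r τ ih =>
    obtain ⟨⟨hsrc, hrule⟩, happ⟩ := happ
    have hen : (ta.rule r).enabledAt (x + δ) :=
      ⟨Nat.add_pos_left hsrc _,
        fun φ hφ => hguards x List.mem_cons_self φ ⟨r, hφ⟩ (hrule φ hφ)⟩
    obtain ⟨happ', happly⟩ := ih happ fun γ hγ => hguards γ (List.mem_cons_of_mem _ hγ)
    rw [applicable, apply, (ta.rule r).fire_add hsrc]
    exact ⟨⟨hen, happ'⟩, happly⟩

namespace steady

variable {ta} {σ σ' : Config L V P} {τ : List R}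

theorem applicable_and_apply_add_nsmul (hsteady : ta.steady σ τ) (happ : ta.applicable σ τ)
    (happl : ta.apply σ τ = σ') {a b : ℕ} (hscale : ta.ScalesGuards (a + b + 1)) :
    ta.applicable (σ + (a • σ + b • σ')) τ ∧
      ta.apply (σ + (a • σ + b • σ')) τ = σ' + (a • σ + b • σ') := by
  subst happl
  refine ta.applicable_add_and_apply_add happ fun γ hγ φ hφ hγφ => ?_
  have hσ' := ta.apply_mem_visited σ τ
  have hσφ : φ.holds σ.g σ.p := (ta.holds_iff_of_context_eq (hsteady γ hγ) hφ).1 hγφ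
  have hσ'φ : φ.holds (ta.apply σ τ).g σ.p := by
    rw [← ta.p_eq_of_mem_visited hσ']
    exact (ta.holds_iff_of_context_eq (hsteady _ hσ') hφ).2 hσφ
  have hp : (γ + (a • σ + b • ta.apply σ τ)).p = (a + b + 1) • σ.p := by
    simp only [Config.add_p, Config.smul_p, ta.p_eq_of_mem_visited hγ,
      ta.p_eq_of_mem_visited hσ']
    module
  obtain ⟨hγ₁, hγ₂⟩ := ta.g_mem_Icc_of_mem_visited hγ
  have hσσ' := ta.le_apply_g σ τ
  have hlower : (a + b + 1) • σ.g ≤ γ.g + (a • σ.g + b • (ta.apply σ τ).g) :=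
    calc (a + b + 1) • σ.g = σ.g + (a • σ.g + b • σ.g) := by module
      _ ≤ _ := by gcongr
  have hupper : γ.g + (a • σ.g + b • (ta.apply σ τ).g) ≤ (a + b + 1) • (ta.apply σ τ).g :=
    calc _ ≤ (ta.apply σ τ).g + (a • (ta.apply σ τ).g + b • (ta.apply σ τ).g) := by gcongr
      _ = _ := by module
  rw [hp]
  exact TGuard.holds_of_le_of_le (TGuard.holds_smul (hscale φ hφ) hσφ)
    (TGuard.holds_smul (hscale φ hφ) hσ'φ) (hlower φ.var) (hupper φ.var)

theorem applicable_and_apply_replicate (hsteady : ta.steady σ τ) (happ : ta.applicable σ τ)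
    (happl : ta.apply σ τ = σ') {a b : ℕ} (hscale : ta.ScalesGuards (a + b)) :
    ta.applicable (a • σ + b • σ') (List.replicate a τ).flatten ∧
      ta.apply (a • σ + b • σ') (List.replicate a τ).flatten = (a + b) • σ' := by
  induction a generalizing b with
  | zero => simp [applicable, apply]
  | succ a ih =>
    have hstart : (a + 1) • σ + b • σ' = σ + (a • σ + b • σ') := by module
    have hnext : σ' + (a • σ + b • σ') = a • σ + (b + 1) • σ' := by module
    obtain ⟨happ₁, happl₁⟩ := hsteady.applicable_and_apply_add_nsmul happ happl
      (a := a) (b := b) (by rwa [add_right_comm] at hscale)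
    obtain ⟨happ₂, happl₂⟩ := ih (b := b + 1) (by rwa [add_right_comm, add_assoc] at hscale)
    rw [List.replicate_succ, List.flatten_cons, applicable_append, apply_append, hstart,
      happl₁, hnext, happl₂, add_right_comm, add_assoc]
    exact ⟨⟨happ₁, happ₂⟩, rfl⟩

end steady

end TA

theorem steady_schedule_smul_general [Fintype P] [DecidableEq L]
    (ta : TA L V P R) (hmult : ta.Multiplicative)
    (σ σ' : Config L V P)
    (τ : List R) (happ : ta.applicable σ τ) (hsteady : ta.steady σ τ)
    (happl : ta.apply σ τ = σ')
    (μ : ℕ) (hμ : 0 < μ) :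
    ta.applicable (Config.smul μ σ) (List.replicate μ τ).flatten ∧
    ta.apply (Config.smul μ σ) (List.replicate μ τ).flatten = Config.smul μ σ' := by
  have hscale : ta.ScalesGuards (μ + 0) := (hmult μ hμ).2
  show ta.applicable (μ • σ) _ ∧ ta.apply (μ • σ) _ = μ • σ'
  simpa using hsteady.applicable_and_apply_replicate happ happl hscale

/-- In a threshold automaton over a multiplicative environment, if `τ` is a steady schedule
applicable to `σ` with `τ(σ) = σ'`, then for every positive integer `μ` the `μ`-fold
concatenation `μ·τ = τ·τ·…·τ` is applicable to `μ·σ` and `(μ·τ)(μ·σ) = μ·σ'`. -/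
theorem steady_schedule_smul [Fintype P] [DecidableEq L] [Fintype L]
    (ta : TA L V P R) (hmult : ta.Multiplicative)
    (σ σ' : Config L V P) (hσ : ta.validConfig σ)
    (τ : List R) (happ : ta.applicable σ τ) (hsteady : ta.steady σ τ)
    (happl : ta.apply σ τ = σ')
    (μ : ℕ) (hμ : 0 < μ) :
    ta.applicable (Config.smul μ σ) (List.replicate μ τ).flatten ∧
    ta.apply (Config.smul μ σ) (List.replicate μ τ).flatten = Config.smul μ σ' :=
  steady_schedule_smul_general ta hmult σ σ' τ happ hsteady happl μ hμ
end
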